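/- Let S be an inverse semigroup and let A and B be closed directed atlases in S. Then (A·B)↑ is a closed directed atlas containing the elementwise product A·B, and every closed atlas containing A·B contains (A·B)↑. Thus (A·B)↑ is both the smallest directed coset and the smallest coset containing A·B. -/

import Mathlib

namespace InvSgpPaper

/-- `inv` makes the semigroup `S` an inverse semigroup: `a * inv a * a = a`,
`inv a * a * inv a = inv a`, and all idempotents commute. -/
structure IsInvSgp (S : Type*) [Semigroup S] (inv : S → S) : Prop where
  mul_inv_mul : ∀ a : S, a * inv a * a = a
  inv_mul_inv : ∀ a : S, inv a * a * inv a = inv a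
  idem_comm : ∀ e f : S, e * e = e → f * f = f → e * f = f * e

section Defs

variable {S X Y : Type*} [Semigroup S]

/-- The natural partial order on an inverse semigroup:
`a ≤ b` iff `a = e * b` for some idempotent `e`. -/
def nle (a b : S) : Prop := ∃ e : S, e * e = e ∧ a = e * b

/-- The upward closure `A↑` of a subset `A`. -/
def up (A : Set S) : Set S := {s : S | ∃ a ∈ A, nle a s}

/-- A closed inverse subsemigroup: closed under multiplication, under `inv`,
and upward closed (`H = H↑`). -/
def IsClosedInvSub (inv : S → S) (H : Set S) : Prop :=
  (∀ a ∈ H, ∀ b ∈ H, a * b ∈ H) ∧ (∀ a ∈ H, inv a ∈ H) ∧ up H = H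

/-- The left coset `(sH)↑ = {x | s * h ≤ x for some h ∈ H}`. -/
def lcoset (s : S) (H : Set S) : Set S := {x : S | ∃ h ∈ H, nle (s * h) x}

/-- The set of idempotents of a subset `A`. -/
def idemSet (A : Set S) : Set S := {e ∈ A | e * e = e}

/-- A filter in `E(S)`: a nonempty set of idempotents closed under
multiplication and upward closed within `E(S)`. -/
def IsFilterE (F : Set S) : Prop :=
  F.Nonempty ∧ (∀ e ∈ F, e * e = e) ∧ (∀ e ∈ F, ∀ f ∈ F, e * f ∈ F) ∧
    (∀ e ∈ F, ∀ f : S, f * f = f → nle e f → f ∈ F)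

/-- `F̄ = {s ∈ S : ∀ f ∈ F, inv s * f * s ∈ F ∧ s * f * inv s ∈ F}`. -/
def fbar (inv : S → S) (F : Set S) : Set S :=
  {s : S | ∀ f ∈ F, inv s * f * s ∈ F ∧ s * f * inv s ∈ F}

/-- The minimum group congruence `σ`: `a σ b` iff some `c` satisfies `c ≤ a` and `c ≤ b`. -/
def sigmaRel (a b : S) : Prop := ∃ c : S, nle c a ∧ nle c b

/-- The elementwise product of two subsets. -/
def setMul (A B : Set S) : Set S := {x : S | ∃ a ∈ A, ∃ b ∈ B, x = a * b}

/-- The elementwise inverse `A⁻¹` of a subset. -/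
def setInv (inv : S → S) (A : Set S) : Set S := inv '' A

/-- An atlas: a subset `A` with `A·A⁻¹·A = A`. -/
def IsAtlas (inv : S → S) (A : Set S) : Prop := setMul (setMul A (setInv inv A)) A = A

/-- A (down-)directed subset: nonempty, and any two elements have a common
lower bound inside it. -/
def IsDirectedSet (A : Set S) : Prop :=
  A.Nonempty ∧ ∀ a ∈ A, ∀ b ∈ A, ∃ c ∈ A, nle c a ∧ nle c b

/-- An action of `S` on `X` by partial maps, axioms (A1) and (A2). -/
def IsAction (act : S → X → Option X) : Prop :=
  (∀ e : S, e * e = e → ∀ x y : X, act e x = some y → y = x) ∧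
    (∀ (s t : S) (x : X), act (s * t) x = (act t x).bind (act s))

/-- Transitivity of an action. -/
def IsTransitiveAct (act : S → X → Option X) : Prop :=
  ∀ x y : X, ∃ s : S, act s x = some y

/-- Effectiveness of an action: every point is in the domain of some element. -/
def IsEffectiveAct (act : S → X → Option X) : Prop :=
  ∀ x : X, ∃ (s : S) (x' : X), act s x = some x'

/-- The stabilizer of a point. -/
def stab (act : S → X → Option X) (x : X) : Set S := {s : S | act s x = some x}

/-- A morphism of `S`-actions. -/
def IsMorphism (actX : S → X → Option X) (actY : S → Y → Option Y) (α : X → Y) : Prop :=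
  ∀ (s : S) (x x' : X), actX s x = some x' → actY s (α x) = some (α x')

/-- A strong morphism of `S`-actions. -/
def IsStrongMorphism (actX : S → X → Option X) (actY : S → Y → Option Y)
    (α : X → Y) : Prop :=
  IsMorphism actX actY α ∧
    ∀ (s : S) (x : X) (y' : Y), actY s (α x) = some y' → ∃ x' : X, actX s x = some x'

end Defs

/-!
Both `A·B` and its upward closure are directed, since the natural order is compatible with
multiplication. Every closed directed set `D` is an atlas: given `u, y, z ∈ D`, a common lower
bound `c ∈ D` of all three gives `c = c·c⁻¹·c ≤ u·y⁻¹·z`, and `x = x·x⁻¹·x` gives the reverse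
inclusion. Minimality is monotonicity of the upward closure.
-/

namespace IsInvSgp

variable {S : Type*} [Semigroup S] {inv : S → S}

lemma mul_inv_idem (hS : IsInvSgp S inv) (a : S) : a * inv a * (a * inv a) = a * inv a := by
  rw [← mul_assoc, hS.mul_inv_mul]

lemma inv_mul_idem (hS : IsInvSgp S inv) (a : S) : inv a * a * (inv a * a) = inv a * a := by
  rw [← mul_assoc, hS.inv_mul_inv]

lemma mul_idem (hS : IsInvSgp S inv) {e f : S} (he : e * e = e) (hf : f * f = f) :
    e * f * (e * f) = e * f :=
  calc e * f * (e * f) = e * (f * e * f) := by simp only [mul_assoc]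
    _ = e * (e * f * f) := by rw [hS.idem_comm f e hf he]
    _ = e * e * (f * f) := by simp only [mul_assoc]
    _ = e * f := by rw [he, hf]

lemma eq_inv_of_mul_mul (hS : IsInvSgp S inv) {a b : S} (h₁ : a * b * a = a)
    (h₂ : b * a * b = b) : b = inv a := by
  have hba : b * a * (b * a) = b * a := by rw [← mul_assoc, h₂]
  have hab : a * b * (a * b) = a * b := by rw [← mul_assoc, h₁]
  have hb : b = inv a * a * b :=
    calc b = b * (a * inv a * a) * b := by rw [hS.mul_inv_mul, h₂]
      _ = b * a * (inv a * a) * b := by simp only [mul_assoc]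
      _ = inv a * a * (b * a * b) := by
          rw [hS.idem_comm _ _ hba (hS.inv_mul_idem a)]; simp only [mul_assoc]
      _ = inv a * a * b := by rw [h₂]
  have hinv : inv a = inv a * a * b :=
    calc inv a = inv a * (a * b * a) * inv a := by rw [h₁, hS.inv_mul_inv]
      _ = inv a * (a * b * (a * inv a)) := by simp only [mul_assoc]
      _ = inv a * a * inv a * (a * b) := by
          rw [hS.idem_comm _ _ hab (hS.mul_inv_idem a)]; simp only [mul_assoc]
      _ = inv a * a * b := by rw [hS.inv_mul_inv, mul_assoc]
  rw [hb, ← hinv]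

lemma inv_inv (hS : IsInvSgp S inv) (a : S) : inv (inv a) = a :=
  (hS.eq_inv_of_mul_mul (hS.inv_mul_inv a) (hS.mul_inv_mul a)).symm

lemma inv_eq_self_of_idem (hS : IsInvSgp S inv) {e : S} (he : e * e = e) : inv e = e :=
  (hS.eq_inv_of_mul_mul (by rw [he, he]) (by rw [he, he])).symm

lemma inv_mul_rev (hS : IsInvSgp S inv) (a b : S) : inv (a * b) = inv b * inv a := by
  refine (hS.eq_inv_of_mul_mul ?_ ?_).symm
  · calc a * b * (inv b * inv a) * (a * b) = a * (b * inv b * (inv a * a)) * b := by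
          simp only [mul_assoc]
      _ = a * inv a * a * (b * inv b * b) := by
          rw [hS.idem_comm _ _ (hS.mul_inv_idem b) (hS.inv_mul_idem a)]; simp only [mul_assoc]
      _ = a * b := by rw [hS.mul_inv_mul, hS.mul_inv_mul]
  · calc inv b * inv a * (a * b) * (inv b * inv a)
          = inv b * (inv a * a * (b * inv b)) * inv a := by simp only [mul_assoc]
      _ = inv b * b * inv b * (inv a * a * inv a) := by
          rw [hS.idem_comm _ _ (hS.inv_mul_idem a) (hS.mul_inv_idem b)]; simp only [mul_assoc]
      _ = inv b * inv a := by rw [hS.inv_mul_inv, hS.inv_mul_inv]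

lemma conj_idem_mul_self (hS : IsInvSgp S inv) (b : S) {f : S} (hf : f * f = f) :
    b * f * inv b * b = b * f :=
  calc b * f * inv b * b = b * (f * (inv b * b)) := by simp only [mul_assoc]
    _ = b * inv b * b * f := by
        rw [hS.idem_comm f _ hf (hS.inv_mul_idem b)]; simp only [mul_assoc]
    _ = b * f := by rw [hS.mul_inv_mul]

lemma conj_idem (hS : IsInvSgp S inv) (b : S) {f : S} (hf : f * f = f) :
    b * f * inv b * (b * f * inv b) = b * f * inv b :=
  calc b * f * inv b * (b * f * inv b) = b * f * inv b * b * (f * inv b) := by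
        simp only [mul_assoc]
    _ = b * f * inv b := by
        rw [hS.conj_idem_mul_self b hf]; simp only [mul_assoc]; rw [← mul_assoc f f, hf]

lemma nle_refl (hS : IsInvSgp S inv) (a : S) : nle a a :=
  ⟨a * inv a, hS.mul_inv_idem a, (hS.mul_inv_mul a).symm⟩

lemma nle_trans (hS : IsInvSgp S inv) {a b c : S} (hab : nle a b) (hbc : nle b c) :
    nle a c := by
  obtain ⟨e, he, rfl⟩ := hab
  obtain ⟨f, hf, rfl⟩ := hbc
  exact ⟨e * f, hS.mul_idem he hf, (mul_assoc e f c).symm⟩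

/-- `e·b·f·d = (e·(b f b⁻¹))·(b·d)`, and `b f b⁻¹` is idempotent. -/
lemma nle_mul (hS : IsInvSgp S inv) {a b c d : S} (hab : nle a b) (hcd : nle c d) :
    nle (a * c) (b * d) := by
  obtain ⟨e, he, rfl⟩ := hab
  obtain ⟨f, hf, rfl⟩ := hcd
  refine ⟨e * (b * f * inv b), hS.mul_idem he (hS.conj_idem b hf), ?_⟩
  calc e * b * (f * d) = e * (b * f * inv b * b * d) := by
        rw [hS.conj_idem_mul_self b hf]; simp only [mul_assoc]
    _ = e * (b * f * inv b) * (b * d) := by simp only [mul_assoc]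

lemma nle_inv (hS : IsInvSgp S inv) {a b : S} (hab : nle a b) : nle (inv a) (inv b) := by
  obtain ⟨e, he, rfl⟩ := hab
  have hconj := hS.conj_idem_mul_self (inv b) he
  rw [hS.inv_inv] at hconj
  refine ⟨inv b * e * b, by simpa only [hS.inv_inv] using hS.conj_idem (inv b) he, ?_⟩
  rw [hS.inv_mul_rev, hS.inv_eq_self_of_idem he, hconj]

end IsInvSgp

section UpperClosure

variable {S : Type*} [Semigroup S] {inv : S → S}

lemma subset_up (hS : IsInvSgp S inv) (A : Set S) : A ⊆ up A :=
  fun a ha => ⟨a, ha, hS.nle_refl a⟩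

lemma up_up (hS : IsInvSgp S inv) (A : Set S) : up (up A) = up A := by
  refine (subset_up hS _).antisymm' ?_
  rintro s ⟨b, ⟨a, ha, hab⟩, hbs⟩
  exact ⟨a, ha, hS.nle_trans hab hbs⟩

lemma up_mono {A B : Set S} (h : A ⊆ B) : up A ⊆ up B :=
  fun _ ⟨a, ha, has⟩ => ⟨a, h ha, has⟩

end UpperClosure

namespace IsDirectedSet

variable {S : Type*} [Semigroup S] {inv : S → S}

lemma exists_nle₃ (hS : IsInvSgp S inv) {A : Set S} (hA : IsDirectedSet A) {a₁ a₂ a₃ : S}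
    (h₁ : a₁ ∈ A) (h₂ : a₂ ∈ A) (h₃ : a₃ ∈ A) :
    ∃ c ∈ A, nle c a₁ ∧ nle c a₂ ∧ nle c a₃ := by
  obtain ⟨c, hc, hc₁, hc₂⟩ := hA.2 a₁ h₁ a₂ h₂
  obtain ⟨d, hd, hdc, hd₃⟩ := hA.2 c hc a₃ h₃
  exact ⟨d, hd, hS.nle_trans hdc hc₁, hS.nle_trans hdc hc₂, hd₃⟩

lemma setMul (hS : IsInvSgp S inv) {A B : Set S} (hA : IsDirectedSet A)
    (hB : IsDirectedSet B) : IsDirectedSet (setMul A B) := by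
  obtain ⟨a, ha⟩ := hA.1
  obtain ⟨b, hb⟩ := hB.1
  refine ⟨⟨a * b, a, ha, b, hb, rfl⟩, ?_⟩
  rintro _ ⟨a₁, ha₁, b₁, hb₁, rfl⟩ _ ⟨a₂, ha₂, b₂, hb₂, rfl⟩
  obtain ⟨a₀, ha₀, ha₀₁, ha₀₂⟩ := hA.2 a₁ ha₁ a₂ ha₂
  obtain ⟨b₀, hb₀, hb₀₁, hb₀₂⟩ := hB.2 b₁ hb₁ b₂ hb₂
  exact ⟨a₀ * b₀, ⟨a₀, ha₀, b₀, hb₀, rfl⟩, hS.nle_mul ha₀₁ hb₀₁, hS.nle_mul ha₀₂ hb₀₂⟩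

lemma isAtlas (hS : IsInvSgp S inv) {A : Set S} (hA : IsDirectedSet A) (hAc : up A = A) :
    IsAtlas inv A := by
  apply Set.Subset.antisymm
  · rintro _ ⟨_, ⟨u, hu, _, ⟨y, hy, rfl⟩, rfl⟩, z, hz, rfl⟩
    obtain ⟨c, hc, hcu, hcy, hcz⟩ := hA.exists_nle₃ hS hu hy hz
    have hc_le : nle (c * inv c * c) (u * inv y * z) :=
      hS.nle_mul (hS.nle_mul hcu (hS.nle_inv hcy)) hcz
    rw [hS.mul_inv_mul] at hc_le
    exact hAc ▸ ⟨c, hc, hc_le⟩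
  · exact fun x hx ↦ ⟨x * inv x, ⟨x, hx, inv x, ⟨x, hx, rfl⟩, rfl⟩, x, hx, (hS.mul_inv_mul x).symm⟩

lemma up (hS : IsInvSgp S inv) {A : Set S} (hA : IsDirectedSet A) :
    IsDirectedSet (InvSgpPaper.up A) := by
  obtain ⟨a, ha⟩ := hA.1
  refine ⟨⟨a, subset_up hS A ha⟩, ?_⟩
  rintro x ⟨p, hp, hpx⟩ y ⟨q, hq, hqy⟩
  obtain ⟨c, hc, hcp, hcq⟩ := hA.2 p hp q hq
  exact ⟨c, subset_up hS A hc, hS.nle_trans hcp hpx, hS.nle_trans hcq hqy⟩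

end IsDirectedSet

theorem stmt15_general {S : Type*} [Semigroup S] (inv : S → S) (hS : IsInvSgp S inv)
    (A B : Set S)
    (hAd : IsDirectedSet A)
    (hBd : IsDirectedSet B) :
    setMul A B ⊆ up (setMul A B) ∧
    up (up (setMul A B)) = up (setMul A B) ∧
    IsDirectedSet (up (setMul A B)) ∧
    IsAtlas inv (up (setMul A B)) ∧
    (∀ C : Set S, up C = C → IsAtlas inv C → setMul A B ⊆ C →
      up (setMul A B) ⊆ C) := by
  have hdir : IsDirectedSet (up (setMul A B)) := (hAd.setMul hS hBd).up hS
  refine ⟨subset_up hS _, up_up hS _, hdir, hdir.isAtlas hS (up_up hS _), ?_⟩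
  intro C hCc _ hAB
  exact hCc ▸ up_mono hAB

/-- For closed directed atlases `A` and `B`, `(A·B)↑` is a closed
directed atlas containing `A·B`, and is contained in every closed atlas
containing `A·B`. -/
theorem stmt15 {S : Type*} [Semigroup S] (inv : S → S) (hS : IsInvSgp S inv)
    (A B : Set S)
    (hAc : up A = A) (hAd : IsDirectedSet A) (hAa : IsAtlas inv A)
    (hBc : up B = B) (hBd : IsDirectedSet B) (hBa : IsAtlas inv B) :
    setMul A B ⊆ up (setMul A B) ∧
    up (up (setMul A B)) = up (setMul A B) ∧
    IsDirectedSet (up (setMul A B)) ∧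
    IsAtlas inv (up (setMul A B)) ∧
    (∀ C : Set S, up C = C → IsAtlas inv C → setMul A B ⊆ C →
      up (setMul A B) ⊆ C) :=
  stmt15_general inv hS A B hAd hBd

end InvSgpPaper
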